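/- Let q > 2 and let v ∈ C¹(ℝ²; ℝ²) with ∇v ∈ L^q(ℝ²). Then for every ε > 0 there exists R > 0 such that |v(x)| ≤ ε |x|^{1−2/q} for all |x| ≥ R; in other words, sup_{|x|=r} |v(x)| = o(r^{1−2/q}) as r → ∞. -/

import Mathlib

/-!
Morrey's argument. For `‖x‖ > R` let `e = x / ‖x‖`, `p = R • e`, and let `B` be the ball of
radius `ρ = (‖x‖ - R) / 2` around the midpoint of `p` and `x`. For `y ∈ {x, p}`, integrate the
fundamental theorem of calculus along the segments from `y` to the points of `B`; the slice at
parameter `t` is the image of `B` under the homothety of ratio `t` about `y`, so Hölder gives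
`∫_B ‖v w - v y‖ ≤ C ρ |B|^(1 - 1/q) ‖Dv‖_{L^q(A)}` as soon as `A` contains the cone from `y`
over `B`, with `C = ∫₀¹ t^(-d/q) dt`, finite exactly because `q > d`. For `A = {R ≤ ‖u‖}`,
averaging the triangle inequality over `B` yields `‖v x - v p‖ ≤ 4 C ρ^(1 - d/q) ‖Dv‖_{L^q(A)}`.
The tail norm `‖Dv‖_{L^q(R ≤ ‖u‖)}` tends to zero and `v` is bounded on the ball of radius `R`,
so `‖v x‖ ≤ ε ‖x‖^(1 - d/q)` for large `‖x‖`.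
-/

open Real MeasureTheory Metric Set Filter Topology Module
open scoped ENNReal

theorem natCast_div_lt_one {d : ℕ} {q : ℝ} (h : (d : ℝ) < q) : (d : ℝ) / q < 1 :=
  (div_lt_one ((Nat.cast_nonneg d).trans_lt h)).2 h

theorem rpow_natCast_inv_mul_rpow {t : ℝ} (ht : 0 < t) (d : ℕ) (q : ℝ) :
    (t ^ d)⁻¹ * (t ^ d) ^ (1 - 1 / q) = t ^ (-(d / q)) := by
  rw [← rpow_natCast, ← rpow_neg ht.le, ← rpow_mul ht.le, ← rpow_add ht]
  ring_nf

theorem lintegral_Ioc_rpow_neg {s : ℝ} (hs : s < 1) :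
    ∫⁻ t in Ioc (0 : ℝ) 1, ENNReal.ofReal (t ^ (-s)) = ENNReal.ofReal (1 - s)⁻¹ := by
  have hs' : -1 < -s := by linarith
  rw [← ofReal_integral_eq_lintegral_ofReal (intervalIntegral.intervalIntegrable_rpow' hs').1
    ((ae_restrict_mem measurableSet_Ioc).mono fun t ht => rpow_nonneg ht.1.le _),
    ← intervalIntegral.integral_of_le zero_le_one, integral_rpow (Or.inl hs'),
    one_rpow, zero_rpow (by linarith), sub_zero, one_div, neg_add_eq_sub]

theorem setLIntegral_enorm_le_eLpNorm_mul_measure_rpow {α G : Type*} [MeasurableSpace α]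
    [NormedAddCommGroup G] {μ : Measure α} {f : α → G} (hf : AEStronglyMeasurable f μ)
    {q : ℝ} (hq : 1 ≤ q) (s : Set α) :
    ∫⁻ u in s, ‖f u‖ₑ ∂μ ≤ eLpNorm f (ENNReal.ofReal q) (μ.restrict s) * μ s ^ (1 - 1 / q) := by
  have h := eLpNorm_le_eLpNorm_mul_rpow_measure_univ (p := 1) (q := ENNReal.ofReal q)
    (by simpa using hq) (hf.restrict (s := s))
  rwa [eLpNorm_one_eq_lintegral_enorm, Measure.restrict_apply_univ,
    ENNReal.toReal_ofReal (by linarith), ENNReal.toReal_one, div_one] at h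

theorem MeasureTheory.MemLp.tendsto_eLpNorm_restrict_norm_ge {α G : Type*}
    [NormedAddCommGroup α] [MeasurableSpace α] [OpensMeasurableSpace α] [NormedAddCommGroup G]
    {μ : Measure α} {p : ℝ≥0∞} {f : α → G} (hf : MemLp f p μ) (hp0 : p ≠ 0) (hp : p ≠ ⊤) :
    Tendsto (fun R : ℝ => eLpNorm f p (μ.restrict {u | R ≤ ‖u‖})) atTop (𝓝 0) := by
  have hS : ∀ R : ℝ, MeasurableSet {u : α | R ≤ ‖u‖} := fun R =>
    measurableSet_le measurable_const measurable_norm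
  set g : α → ℝ≥0∞ := fun u => ‖f u‖ₑ ^ p.toReal
  have htail : Tendsto (fun R : ℝ => ∫⁻ u, {u | R ≤ ‖u‖}.indicator g u ∂μ) atTop (𝓝 0) := by
    rw [← lintegral_zero (μ := μ)]
    refine tendsto_lintegral_filter_of_dominated_convergence' (f := fun _ => 0) g
      (.of_forall fun R => (hf.1.enorm.pow_const _).indicator (hS R))
      (.of_forall fun R => .of_forall (indicator_le_self _ _))
      (lintegral_rpow_enorm_lt_top_of_eLpNorm_lt_top hp0 hp hf.2).ne
      (.of_forall fun u => tendsto_const_nhds.congr' ?_)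
    filter_upwards [eventually_gt_atTop ‖u‖] with R hR
    simp [hR.not_ge]
  have hroot := htail.ennrpow_const (1 / p.toReal)
  rw [ENNReal.zero_rpow_of_pos (by simp [ENNReal.toReal_pos hp0 hp])] at hroot
  refine hroot.congr fun R => ?_
  rw [eLpNorm_eq_lintegral_rpow_enorm_toReal hp0 hp, lintegral_indicator (hS R)]

theorem enorm_sub_le_ofReal_of_mem_ball {E : Type*} [SeminormedAddCommGroup E] {y c w : E}
    {ρ : ℝ} (hw : w ∈ ball c ρ) : ‖w - y‖ₑ ≤ ENNReal.ofReal (‖c - y‖ + ρ) := by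
  rw [← ofReal_norm]
  refine ENNReal.ofReal_le_ofReal ((norm_sub_le_norm_sub_add_norm_sub w c y).trans ?_)
  linarith [mem_ball_iff_norm.mp hw]

section Normed

variable {E F : Type*} [NormedAddCommGroup E] [NormedSpace ℝ E]
  [NormedAddCommGroup F] [NormedSpace ℝ F]

theorem enorm_sub_le_lintegral_fderiv_segment {v : E → F} (hv : ContDiff ℝ 1 v) (y w : E) :
    ‖v w - v y‖ₑ ≤ ∫⁻ t in Ioc (0 : ℝ) 1, ‖fderiv ℝ v (y + t • (w - y))‖ₑ * ‖w - y‖ₑ := by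
  have hγ : ∀ t : ℝ, HasDerivAt (fun t : ℝ => y + t • (w - y)) (w - y) t := fun t => by
    simpa using ((hasDerivAt_id t).smul_const (w - y)).const_add y
  have h := enorm_sub_le_lintegral_deriv_of_contDiffOn_Icc
    (hv.comp (f := fun t : ℝ => y + t • (w - y)) (by fun_prop)).contDiffOn zero_le_one
  simp only [Function.comp_apply, one_smul, zero_smul, add_zero, add_sub_cancel] at h
  rw [restrict_Ioc_eq_restrict_Icc]
  refine h.trans (lintegral_mono fun t => ?_)
  rw [(((hv.differentiable one_ne_zero _).hasFDerivAt).comp_hasDerivAt t (hγ t)).deriv]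
  exact ContinuousLinearMap.le_opENorm _ _

theorem preimage_homothety_ball (y c : E) {t : ℝ} (ht : 0 < t) (ρ : ℝ) :
    (fun w => y + t • (w - y)) ⁻¹' ball (y + t • (c - y)) (t * ρ) = ball c ρ := by
  ext w
  have hdiff : y + t • (w - y) - (y + t • (c - y)) = t • (w - c) := by module
  simp only [mem_preimage, mem_ball, dist_eq_norm, hdiff, norm_smul, Real.norm_eq_abs,
    abs_of_pos ht, mul_lt_mul_iff_right₀ ht]

theorem ball_segment_subset_norm_ge {e : E} (he : ‖e‖ = 1) {a b R ρ : ℝ} (ha : R ≤ a)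
    (hb : R + ρ ≤ b) :
    ∀ t ∈ Ioc (0 : ℝ) 1, ball (a • e + t • (b • e - a • e)) (t * ρ) ⊆ {u | R ≤ ‖u‖} := by
  intro t ht u hu
  have hcenter : a • e + t • (b • e - a • e) = (a + t * (b - a)) • e := by module
  have hnorm : R + t * ρ ≤ ‖a • e + t • (b • e - a • e)‖ := by
    rw [hcenter, norm_smul, he, mul_one, Real.norm_eq_abs]
    nlinarith [le_abs_self (a + t * (b - a)), ht.1, ht.2]
  show R ≤ ‖u‖
  linarith [norm_le_norm_add_norm_sub' (a • e + t • (b • e - a • e)) u, mem_ball_iff_norm'.mp hu]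

end Normed

section AddHaar

variable {E F : Type*} [NormedAddCommGroup E] [NormedSpace ℝ E] [FiniteDimensional ℝ E]
  [MeasurableSpace E] [BorelSpace E] (μ : Measure E) [μ.IsAddHaarMeasure]
  [NormedAddCommGroup F] [NormedSpace ℝ F]

theorem map_homothety_addHaar (y : E) {t : ℝ} (ht : 0 < t) :
    μ.map (fun w => y + t • (w - y)) = ENNReal.ofReal ((t ^ finrank ℝ E)⁻¹) • μ := by
  have hφ : (fun w => y + t • (w - y)) = (fun u => (y - t • y) + u) ∘ (t • ·) := by
    ext w; simp only [Function.comp_apply, smul_sub]; abel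
  rw [hφ, ← Measure.map_map (by fun_prop) (by fun_prop), Measure.map_addHaar_smul μ ht.ne',
    Measure.map_smul, map_add_left_eq_self, abs_of_pos (by positivity)]

theorem setLIntegral_ball_comp_homothety {g : E → ℝ≥0∞} (hg : Measurable g) (y c : E)
    {t : ℝ} (ht : 0 < t) (ρ : ℝ) :
    ∫⁻ w in ball c ρ, g (y + t • (w - y)) ∂μ =
      ENNReal.ofReal ((t ^ finrank ℝ E)⁻¹) * ∫⁻ u in ball (y + t • (c - y)) (t * ρ), g u ∂μ := by
  rw [← preimage_homothety_ball y c ht ρ,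
    ← setLIntegral_map measurableSet_ball hg (by fun_prop), map_homothety_addHaar μ y ht,
    Measure.restrict_smul, lintegral_smul_measure, smul_eq_mul]

theorem setLIntegral_ball_comp_homothety_le {G : Type*} [NormedAddCommGroup G] {f : E → G}
    (hf : Continuous f) {q : ℝ} (hq : 1 ≤ q) {A : Set E} {y c : E} {t ρ : ℝ} (ht : 0 < t)
    (hA : ball (y + t • (c - y)) (t * ρ) ⊆ A) :
    ∫⁻ w in ball c ρ, ‖f (y + t • (w - y))‖ₑ ∂μ ≤ ENNReal.ofReal (t ^ (-(finrank ℝ E / q))) *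
      eLpNorm f (ENNReal.ofReal q) (μ.restrict A) * μ (ball c ρ) ^ (1 - 1 / q) := by
  have hvol : μ (ball (y + t • (c - y)) (t * ρ)) =
      ENNReal.ofReal (t ^ finrank ℝ E) * μ (ball c ρ) := by
    rw [Measure.addHaar_ball_mul_of_pos μ _ ht, Measure.addHaar_ball_center μ c]
  have hexp : 0 ≤ 1 - 1 / q := by
    rw [sub_nonneg, div_le_one (by linarith)]; exact hq
  calc ∫⁻ w in ball c ρ, ‖f (y + t • (w - y))‖ₑ ∂μ
      = ENNReal.ofReal ((t ^ finrank ℝ E)⁻¹) *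
          ∫⁻ u in ball (y + t • (c - y)) (t * ρ), ‖f u‖ₑ ∂μ :=
        setLIntegral_ball_comp_homothety μ hf.enorm.measurable y c ht ρ
    _ ≤ ENNReal.ofReal ((t ^ finrank ℝ E)⁻¹) *
          (eLpNorm f (ENNReal.ofReal q) (μ.restrict A) *
            (ENNReal.ofReal (t ^ finrank ℝ E) * μ (ball c ρ)) ^ (1 - 1 / q)) := by
        rw [← hvol]
        gcongr
        exact (setLIntegral_enorm_le_eLpNorm_mul_measure_rpow hf.aestronglyMeasurable hq _).trans
          (by gcongr)
    _ = _ := by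
        rw [ENNReal.mul_rpow_of_nonneg _ _ hexp,
          ENNReal.ofReal_rpow_of_nonneg (by positivity) hexp, ← rpow_natCast_inv_mul_rpow ht,
          ENNReal.ofReal_mul (by positivity)]
        ring

variable [Nontrivial E]

theorem setLIntegral_ball_enorm_sub_le {q : ℝ} (hq : (finrank ℝ E : ℝ) < q) {v : E → F}
    (hv : ContDiff ℝ 1 v) {A : Set E} {y c : E} {ρ : ℝ}
    (hA : ∀ t ∈ Ioc (0 : ℝ) 1, ball (y + t • (c - y)) (t * ρ) ⊆ A) :
    ∫⁻ w in ball c ρ, ‖v w - v y‖ₑ ∂μ ≤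
      ENNReal.ofReal ((‖c - y‖ + ρ) * (1 - finrank ℝ E / q)⁻¹) *
        eLpNorm (fderiv ℝ v) (ENNReal.ofReal q) (μ.restrict A) * μ (ball c ρ) ^ (1 - 1 / q) := by
  have hq1 : 1 ≤ q := le_trans (by exact_mod_cast finrank_pos) hq.le
  have hdq := natCast_div_lt_one hq
  have hDv : Continuous (fderiv ℝ v) := hv.continuous_fderiv one_ne_zero
  set L := ENNReal.ofReal (‖c - y‖ + ρ)
  set G : E → ℝ → ℝ≥0∞ := fun w t => ‖fderiv ℝ v (y + t • (w - y))‖ₑ * L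
  have hsegment : Continuous fun p : E × ℝ => y + p.2 • (p.1 - y) := by fun_prop
  have hG : Measurable (Function.uncurry G) :=
    (hDv.comp hsegment).enorm.measurable.mul_const L
  calc ∫⁻ w in ball c ρ, ‖v w - v y‖ₑ ∂μ
      ≤ ∫⁻ w in ball c ρ, (∫⁻ t in Ioc (0 : ℝ) 1, G w t) ∂μ := by
        refine setLIntegral_mono' measurableSet_ball fun w hw => ?_
        exact (enorm_sub_le_lintegral_fderiv_segment hv y w).trans
          (lintegral_mono fun t => mul_le_mul_right (enorm_sub_le_ofReal_of_mem_ball hw) _)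
    _ = ∫⁻ t in Ioc (0 : ℝ) 1, ∫⁻ w in ball c ρ, G w t ∂μ :=
        lintegral_lintegral_swap hG.aemeasurable
    _ ≤ ∫⁻ t in Ioc (0 : ℝ) 1, ENNReal.ofReal (t ^ (-(finrank ℝ E / q))) *
          (eLpNorm (fderiv ℝ v) (ENNReal.ofReal q) (μ.restrict A) *
            μ (ball c ρ) ^ (1 - 1 / q) * L) := by
        refine setLIntegral_mono' measurableSet_Ioc fun t ht => ?_
        simp only [G]
        rw [lintegral_mul_const' L _ ENNReal.ofReal_ne_top]
        exact (mul_le_mul_left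
          (setLIntegral_ball_comp_homothety_le μ hDv hq1 ht.1 (hA t ht)) L).trans_eq (by ring)
    _ = _ := by
        rw [lintegral_mul_const _ (by fun_prop), lintegral_Ioc_rpow_neg hdq,
          ENNReal.ofReal_mul' (inv_nonneg.2 (sub_pos.2 hdq).le)]
        ring

theorem enorm_sub_mul_measure_ball_rpow_le {q : ℝ} (hq : (finrank ℝ E : ℝ) < q) {v : E → F}
    (hv : ContDiff ℝ 1 v) {A : Set E} {x p c : E} {ρ : ℝ} (hρ : 0 < ρ)
    (hx : ‖c - x‖ ≤ ρ) (hp : ‖c - p‖ ≤ ρ)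
    (hAx : ∀ t ∈ Ioc (0 : ℝ) 1, ball (x + t • (c - x)) (t * ρ) ⊆ A)
    (hAp : ∀ t ∈ Ioc (0 : ℝ) 1, ball (p + t • (c - p)) (t * ρ) ⊆ A) :
    ‖v x - v p‖ₑ * μ (ball c ρ) ^ (1 / q) ≤
      ENNReal.ofReal (4 * ρ * (1 - finrank ℝ E / q)⁻¹) *
        eLpNorm (fderiv ℝ v) (ENNReal.ofReal q) (μ.restrict A) := by
  have hC : 0 ≤ (1 - finrank ℝ E / q)⁻¹ := inv_nonneg.2 (sub_pos.2 (natCast_div_lt_one hq)).le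
  set N := eLpNorm (fderiv ℝ v) (ENNReal.ofReal q) (μ.restrict A)
  set m := μ (ball c ρ)
  have hm0 : m ≠ 0 := (measure_ball_pos μ c hρ).ne'
  have hm : m ≠ ⊤ := measure_ball_lt_top.ne
  have hma0 : m ^ (1 - 1 / q) ≠ 0 := (ENNReal.rpow_pos (pos_iff_ne_zero.2 hm0) hm).ne'
  have hma : m ^ (1 - 1 / q) ≠ ⊤ := ENNReal.rpow_ne_top_of_nonneg' (pos_iff_ne_zero.2 hm0) hm
  have hleg : ∀ y, ‖c - y‖ ≤ ρ → (∀ t ∈ Ioc (0 : ℝ) 1, ball (y + t • (c - y)) (t * ρ) ⊆ A) →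
      ∫⁻ w in ball c ρ, ‖v w - v y‖ₑ ∂μ ≤
        ENNReal.ofReal (2 * ρ * (1 - finrank ℝ E / q)⁻¹) * N * m ^ (1 - 1 / q) := fun y hy hA =>
    (setLIntegral_ball_enorm_sub_le μ hq hv hA).trans (by gcongr; linarith)
  have hmean : ‖v x - v p‖ₑ * m ≤
      ∫⁻ w in ball c ρ, ‖v w - v x‖ₑ ∂μ + ∫⁻ w in ball c ρ, ‖v w - v p‖ₑ ∂μ := by
    have hmeas : Measurable fun w => ‖v w - v x‖ₑ :=
      (hv.continuous.sub continuous_const).enorm.measurable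
    rw [← setLIntegral_const, ← lintegral_add_left hmeas]
    refine setLIntegral_mono' measurableSet_ball fun w _ => ?_
    simpa only [edist_eq_enorm_sub] using edist_triangle_left (v x) (v p) (v w)
  have hsplit : m = m ^ (1 / q) * m ^ (1 - 1 / q) := by
    rw [← ENNReal.rpow_add _ _ hm0 hm, add_sub_cancel, ENNReal.rpow_one]
  refine (ENNReal.mul_le_mul_iff_left hma0 hma).1 ?_
  calc ‖v x - v p‖ₑ * m ^ (1 / q) * m ^ (1 - 1 / q) = ‖v x - v p‖ₑ * m := by
        rw [mul_assoc, ← hsplit]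
    _ ≤ ENNReal.ofReal (2 * ρ * (1 - finrank ℝ E / q)⁻¹) * N * m ^ (1 - 1 / q) +
        ENNReal.ofReal (2 * ρ * (1 - finrank ℝ E / q)⁻¹) * N * m ^ (1 - 1 / q) :=
      hmean.trans (add_le_add (hleg x hx hAx) (hleg p hp hAp))
    _ = ENNReal.ofReal (4 * ρ * (1 - finrank ℝ E / q)⁻¹) * N * m ^ (1 - 1 / q) := by
      rw [← add_mul, ← add_mul, ← ENNReal.ofReal_add (by positivity) (by positivity)]
      ring_nf

theorem norm_sub_smul_le_of_eLpNorm_fderiv_le {q : ℝ} (hq : (finrank ℝ E : ℝ) < q) {v : E → F}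
    (hv : ContDiff ℝ 1 v) {e : E} (he : ‖e‖ = 1) {R ρ δ : ℝ} (hρ : 0 < ρ) (hδ : 0 ≤ δ)
    (hN : eLpNorm (fderiv ℝ v) (ENNReal.ofReal q) (μ.restrict {u | R ≤ ‖u‖}) ≤
      ENNReal.ofReal δ * μ (ball 0 1) ^ (1 / q)) :
    ‖v ((R + 2 * ρ) • e) - v (R • e)‖ ≤
      4 * (1 - finrank ℝ E / q)⁻¹ * δ * ρ ^ (1 - finrank ℝ E / q) := by
  have hq0 : 0 < q := (Nat.cast_nonneg _).trans_lt hq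
  have hC : 0 ≤ (1 - finrank ℝ E / q)⁻¹ := inv_nonneg.2 (sub_pos.2 (natCast_div_lt_one hq)).le
  set V := μ (ball (0 : E) 1) ^ (1 / q)
  have hV0 : V ≠ 0 := (ENNReal.rpow_pos (measure_ball_pos μ _ one_pos) measure_ball_lt_top.ne).ne'
  have hV : V ≠ ⊤ := ENNReal.rpow_ne_top_of_nonneg (by positivity) measure_ball_lt_top.ne
  have hdist : ∀ a : ℝ, |R + ρ - a| ≤ ρ → ‖(R + ρ) • e - a • e‖ ≤ ρ := fun a ha => by
    rwa [← sub_smul, norm_smul, he, mul_one, Real.norm_eq_abs]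
  have hball : μ (ball ((R + ρ) • e) ρ) ^ (1 / q) =
      ENNReal.ofReal (ρ ^ (finrank ℝ E / q)) * V := by
    rw [Measure.addHaar_ball_of_pos μ _ hρ, ENNReal.mul_rpow_of_nonneg _ _ (by positivity),
      ENNReal.ofReal_rpow_of_nonneg (by positivity) (by positivity), ← rpow_natCast,
      ← rpow_mul hρ.le, mul_one_div]
  have key := enorm_sub_mul_measure_ball_rpow_le μ hq hv hρ
    (hdist _ (by rw [abs_le]; constructor <;> linarith))
    (hdist _ (by rw [abs_le]; constructor <;> linarith))
    (ball_segment_subset_norm_ge he (a := R + 2 * ρ) (by linarith) le_rfl)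
    (ball_segment_subset_norm_ge he (a := R) le_rfl le_rfl)
  rw [hball, ← mul_assoc, ← ofReal_norm, ← ENNReal.ofReal_mul (norm_nonneg _)] at key
  replace key := key.trans (mul_le_mul_right hN _)
  rw [← mul_assoc, ← ENNReal.ofReal_mul (by positivity), ENNReal.mul_le_mul_iff_left hV0 hV,
    ENNReal.ofReal_le_ofReal_iff (by positivity)] at key
  refine le_of_mul_le_mul_right (key.trans_eq ?_) (rpow_pos_of_pos hρ (finrank ℝ E / q))
  have hρsplit : ρ = ρ ^ (1 - finrank ℝ E / q) * ρ ^ (finrank ℝ E / q) := by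
    rw [← rpow_add hρ, sub_add_cancel, rpow_one]
  conv_lhs => rw [hρsplit]
  ring

theorem norm_le_add_mul_rpow_of_eLpNorm_fderiv_le {q : ℝ} (hq : (finrank ℝ E : ℝ) < q)
    {v : E → F} (hv : ContDiff ℝ 1 v) {R M δ : ℝ} (hR : 0 ≤ R) (hδ : 0 ≤ δ)
    (hM : ∀ z ∈ closedBall (0 : E) R, ‖v z‖ ≤ M)
    (hN : eLpNorm (fderiv ℝ v) (ENNReal.ofReal q) (μ.restrict {u | R ≤ ‖u‖}) ≤
      ENNReal.ofReal δ * μ (ball 0 1) ^ (1 / q))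
    {x : E} (hx : R < ‖x‖) :
    ‖v x‖ ≤ M + 4 * (1 - finrank ℝ E / q)⁻¹ * δ * ‖x‖ ^ (1 - finrank ℝ E / q) := by
  have hx0 : x ≠ 0 := norm_pos_iff.1 (hR.trans_lt hx)
  set e := (‖x‖⁻¹ : ℝ) • x
  have he : ‖e‖ = 1 := norm_smul_inv_norm hx0
  have hxe : (R + 2 * ((‖x‖ - R) / 2)) • e = x := by
    rw [smul_smul, show R + 2 * ((‖x‖ - R) / 2) = ‖x‖ by ring,
      mul_inv_cancel₀ (norm_ne_zero_iff.2 hx0), one_smul]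
  have hRe : R • e ∈ closedBall (0 : E) R := by
    rw [mem_closedBall_zero_iff, norm_smul, he, mul_one, Real.norm_eq_abs, abs_of_nonneg hR]
  have hosc := norm_sub_smul_le_of_eLpNorm_fderiv_le μ hq hv he
    (by linarith : 0 < (‖x‖ - R) / 2) hδ hN
  rw [hxe] at hosc
  calc ‖v x‖ ≤ ‖v (R • e)‖ + ‖v x - v (R • e)‖ := norm_le_norm_add_norm_sub' _ _
    _ ≤ M + 4 * (1 - finrank ℝ E / q)⁻¹ * δ * ((‖x‖ - R) / 2) ^ (1 - finrank ℝ E / q) :=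
      add_le_add (hM _ hRe) hosc
    _ ≤ M + 4 * (1 - finrank ℝ E / q)⁻¹ * δ * ‖x‖ ^ (1 - finrank ℝ E / q) := by
      have hdq := natCast_div_lt_one hq
      have : 0 ≤ (1 - finrank ℝ E / q)⁻¹ := inv_nonneg.2 (sub_pos.2 hdq).le
      gcongr
      linarith

theorem exists_norm_le_mul_rpow_of_memLp_fderiv {q : ℝ} (hq : (finrank ℝ E : ℝ) < q)
    {v : E → F} (hv : ContDiff ℝ 1 v) (hDv : MemLp (fderiv ℝ v) (ENNReal.ofReal q) μ)
    {ε : ℝ} (hε : 0 < ε) :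
    ∃ R > 0, ∀ x : E, R ≤ ‖x‖ → ‖v x‖ ≤ ε * ‖x‖ ^ (1 - finrank ℝ E / q) := by
  have hq0 : 0 < q := (Nat.cast_nonneg _).trans_lt hq
  have hdq := natCast_div_lt_one hq
  set K := 4 * (1 - finrank ℝ E / q)⁻¹
  have hK : 0 < K := by have := sub_pos.2 hdq; positivity
  set δ := ε / (2 * K)
  have hbound : 0 < ENNReal.ofReal δ * μ (ball 0 1) ^ (1 / q) :=
    ENNReal.mul_pos (by simp; positivity)
      (ENNReal.rpow_pos (measure_ball_pos μ _ one_pos) measure_ball_lt_top.ne).ne'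
  obtain ⟨R₁, hN, hR₁⟩ := (((hDv.tendsto_eLpNorm_restrict_norm_ge (by simpa using hq0)
    ENNReal.ofReal_ne_top).eventually (gt_mem_nhds hbound)).and (eventually_ge_atTop 0)).exists
  obtain ⟨M, hM⟩ := (isCompact_closedBall (0 : E) R₁).exists_bound_of_continuousOn
    hv.continuous.continuousOn
  obtain ⟨R₂, hR₂⟩ := eventually_atTop.1
    (((tendsto_rpow_atTop (sub_pos.2 hdq)).const_mul_atTop (half_pos hε)).eventually_ge_atTop M)
  refine ⟨max (R₁ + 1) R₂, lt_max_of_lt_left (by linarith), fun x hx => ?_⟩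
  have hKδ : K * δ = ε / 2 := by simp only [δ]; field_simp
  calc ‖v x‖ ≤ M + K * δ * ‖x‖ ^ (1 - finrank ℝ E / q) :=
        norm_le_add_mul_rpow_of_eLpNorm_fderiv_le μ hq hv hR₁ (by positivity) hM hN.le
          (by linarith [le_max_left (R₁ + 1) R₂])
    _ ≤ ε / 2 * ‖x‖ ^ (1 - finrank ℝ E / q) + ε / 2 * ‖x‖ ^ (1 - finrank ℝ E / q) := by
        rw [hKδ]
        gcongr
        exact hR₂ _ (le_of_max_le_right hx)
    _ = ε * ‖x‖ ^ (1 - finrank ℝ E / q) := by ring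

end AddHaar

theorem stmt8 (q : ℝ) (hq : 2 < q)
    (v : EuclideanSpace ℝ (Fin 2) → EuclideanSpace ℝ (Fin 2))
    (hv : ContDiff ℝ 1 v)
    (hlq : MemLp (fun x => fderiv ℝ v x) (ENNReal.ofReal q) volume) :
    ∀ ε > 0, ∃ R > 0, ∀ x : EuclideanSpace ℝ (Fin 2),
      R ≤ ‖x‖ → ‖v x‖ ≤ ε * ‖x‖ ^ (1 - 2 / q) := by
  have hdim : (finrank ℝ (EuclideanSpace ℝ (Fin 2)) : ℝ) = 2 := by
    rw [finrank_euclideanSpace_fin, Nat.cast_ofNat]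
  intro ε hε
  simpa only [hdim] using exists_norm_le_mul_rpow_of_memLp_fderiv volume (hdim ▸ hq) hv hlq hε
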